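/- arXiv:math/9912218 — 4 statements merged into one kernel-verified Lean document; each statement's English description precedes it below -/
import Mathlib

section
/- For all ξ, ζ ∈ ℂ one has θ₄(ξ|τ/2)·θ₃(ζ|τ/2) − θ₃(ξ|τ/2)·θ₄(ζ|τ/2) = 2·θ₁(ξ+ζ|τ)·θ₁(ξ−ζ|τ). -/
/-!
Multiplying out, the left side is a double series over `(m, n) ∈ ℤ²` whose terms are
`((-1)^m - (-1)^n) e^{πiτ(m² + n²)/2 + 2πi(mξ + nζ)}`, because shifting `z` by `1/2` multiplies
the `n`-th term of `θ₃(z|τ)` by `(-1)^n`. The terms with `m + n` even cancel, and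
`(a, b) ↦ (a + b + 1, a - b)` maps `ℤ²` bijectively onto the pairs with `m + n` odd. Since
`(m² + n²)/2 = (a + ½)² + (b + ½)²` and `mξ + nζ = (a + ½)(ξ + ζ) + (b + ½)(ξ - ζ)`, the
term indexed by `(a + b + 1, a - b)` is twice the `(a, b)` term of `θ₁(ξ + ζ|τ) θ₁(ξ - ζ|τ)`.
-/

/-- Jacobi theta function `θ_a(z|τ)` for `a = 1,2,3,4`. -/
noncomputable def jTheta (a : ℕ) (z τ : ℂ) : ℂ :=
  match a with
  | 1 => -∑' k : ℤ, Complex.exp ((Real.pi : ℂ) * Complex.I * τ * ((k : ℂ) + 1/2)^2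
          + 2 * (Real.pi : ℂ) * Complex.I * (z + 1/2) * ((k : ℂ) + 1/2))
  | 2 => ∑' k : ℤ, Complex.exp ((Real.pi : ℂ) * Complex.I * τ * ((k : ℂ) + 1/2)^2
          + 2 * (Real.pi : ℂ) * Complex.I * z * ((k : ℂ) + 1/2))
  | 3 => ∑' k : ℤ, Complex.exp ((Real.pi : ℂ) * Complex.I * τ * (k : ℂ)^2
          + 2 * (Real.pi : ℂ) * Complex.I * z * (k : ℂ))
  | 4 => ∑' k : ℤ, Complex.exp ((Real.pi : ℂ) * Complex.I * τ * (k : ℂ)^2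
          + 2 * (Real.pi : ℂ) * Complex.I * (z + 1/2) * (k : ℂ))
  | _ => 0

open Complex Real

theorem tsum_int_prod_eq_of_even_sum_eq_zero {α : Type*} [AddCommMonoid α] [TopologicalSpace α]
    {f : ℤ × ℤ → α} (hf : ∀ p : ℤ × ℤ, Even (p.1 + p.2) → f p = 0) :
    ∑' p, f p = ∑' p : ℤ × ℤ, f (p.1 + p.2 + 1, p.1 - p.2) := by
  refine (Function.Injective.tsum_eq (g := fun p : ℤ × ℤ ↦ (p.1 + p.2 + 1, p.1 - p.2))
    (fun p q h ↦ ?_) fun p hp ↦ ?_).symm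
  · simp only [Prod.mk.injEq] at h
    exact Prod.ext (by omega) (by omega)
  · obtain ⟨c, hc⟩ := Int.not_even_iff_odd.1 (mt (hf p) hp)
    exact ⟨(c, p.1 - c - 1), Prod.ext (by simp only; omega) (by simp only; omega)⟩

theorem tsum_mul_tsum_sub_tsum_mul_tsum {R ι κ : Type*} [NormedRing R] [CompleteSpace R]
    {f₁ f₂ : ι → R} {g₁ g₂ : κ → R}
    (hf₁ : Summable (‖f₁ ·‖)) (hg₁ : Summable (‖g₁ ·‖))
    (hf₂ : Summable (‖f₂ ·‖)) (hg₂ : Summable (‖g₂ ·‖)) :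
    (∑' i, f₁ i) * (∑' j, g₁ j) - (∑' i, f₂ i) * (∑' j, g₂ j)
      = ∑' p : ι × κ, (f₁ p.1 * g₁ p.2 - f₂ p.1 * g₂ p.2) := by
  rw [tsum_mul_tsum_of_summable_norm hf₁ hg₁, tsum_mul_tsum_of_summable_norm hf₂ hg₂,
    (summable_mul_of_summable_norm hf₁ hg₁).tsum_sub (summable_mul_of_summable_norm hf₂ hg₂)]

noncomputable def jTheta₁_term (k : ℤ) (z τ : ℂ) : ℂ :=
  cexp (π * I * τ * (k + 1 / 2) ^ 2 + 2 * π * I * (z + 1 / 2) * (k + 1 / 2))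

theorem jTheta_one_eq (z τ : ℂ) : jTheta 1 z τ = -∑' k : ℤ, jTheta₁_term k z τ := rfl

theorem jTheta_three_eq (z τ : ℂ) : jTheta 3 z τ = jacobiTheta₂ z τ :=
  tsum_congr fun k ↦ by simp only [jacobiTheta₂_term]; ring_nf

theorem jTheta_four_eq (z τ : ℂ) : jTheta 4 z τ = jacobiTheta₂ (z + 1 / 2) τ :=
  tsum_congr fun k ↦ by simp only [jacobiTheta₂_term]; ring_nf

theorem jTheta₁_term_eq_mul_jacobiTheta₂_term (k : ℤ) (z τ : ℂ) :
    jTheta₁_term k z τ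
      = cexp (π * I * τ / 4 + π * I * (z + 1 / 2)) * jacobiTheta₂_term k (z + 1 / 2 + τ / 2) τ := by
  rw [jTheta₁_term, jacobiTheta₂_term, ← Complex.exp_add]
  ring_nf

theorem summable_norm_jacobiTheta₂_term (z : ℂ) {τ : ℂ} (hτ : 0 < τ.im) :
    Summable (‖jacobiTheta₂_term · z τ‖) :=
  summable_norm_iff.2 <| (summable_jacobiTheta₂_term_iff z τ).2 hτ

theorem summable_norm_jTheta₁_term (z : ℂ) {τ : ℂ} (hτ : 0 < τ.im) :
    Summable (‖jTheta₁_term · z τ‖) := by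
  simpa only [jTheta₁_term_eq_mul_jacobiTheta₂_term, norm_mul] using
    (summable_norm_jacobiTheta₂_term (z + 1 / 2 + τ / 2) hτ).mul_left _

theorem jTheta_one_mul_jTheta_one {τ : ℂ} (hτ : 0 < τ.im) (z w : ℂ) :
    jTheta 1 z τ * jTheta 1 w τ = ∑' p : ℤ × ℤ, jTheta₁_term p.1 z τ * jTheta₁_term p.2 w τ := by
  rw [jTheta_one_eq, jTheta_one_eq, neg_mul_neg,
    tsum_mul_tsum_of_summable_norm (summable_norm_jTheta₁_term z hτ)
      (summable_norm_jTheta₁_term w hτ)]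

theorem jacobiTheta₂_term_add_half_mul_of_even {m n : ℤ} (hmn : Even (m + n)) (ξ ζ τ : ℂ) :
    jacobiTheta₂_term m (ξ + 1 / 2) τ * jacobiTheta₂_term n ζ τ
      = jacobiTheta₂_term m ξ τ * jacobiTheta₂_term n (ζ + 1 / 2) τ := by
  obtain ⟨c, hc⟩ := hmn
  simp only [jacobiTheta₂_term, ← Complex.exp_add, exp_eq_exp_iff_exists_int]
  refine ⟨c - n, ?_⟩
  have hm : (m : ℂ) = c + c - n := by exact_mod_cast (by omega : m = c + c - n)
  rw [hm]
  push_cast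
  ring

theorem jacobiTheta₂_term_add_half_mul_eq_jTheta₁_term_mul (a b : ℤ) (ξ ζ τ : ℂ) :
    jacobiTheta₂_term (a + b + 1) (ξ + 1 / 2) (τ / 2) * jacobiTheta₂_term (a - b) ζ (τ / 2)
      = jTheta₁_term a (ξ + ζ) τ * jTheta₁_term b (ξ - ζ) τ := by
  simp only [jacobiTheta₂_term, jTheta₁_term, ← Complex.exp_add]
  push_cast
  ring_nf

theorem jacobiTheta₂_term_mul_add_half_eq_neg_jTheta₁_term_mul (a b : ℤ) (ξ ζ τ : ℂ) :
    jacobiTheta₂_term (a + b + 1) ξ (τ / 2) * jacobiTheta₂_term (a - b) (ζ + 1 / 2) (τ / 2)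
      = -(jTheta₁_term a (ξ + ζ) τ * jTheta₁_term b (ξ - ζ) τ) := by
  rw [← neg_one_mul, ← exp_pi_mul_I]
  simp only [jacobiTheta₂_term, jTheta₁_term, ← Complex.exp_add, exp_eq_exp_iff_exists_int]
  refine ⟨-b - 1, ?_⟩
  push_cast
  ring

/-- For all `ξ, ζ ∈ ℂ`:
`θ₄(ξ|τ/2)·θ₃(ζ|τ/2) − θ₃(ξ|τ/2)·θ₄(ζ|τ/2) = 2·θ₁(ξ+ζ|τ)·θ₁(ξ−ζ|τ)`. -/
theorem theta_half_period_product (τ : ℂ) (hτ : 0 < τ.im) (ξ ζ : ℂ) :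
    jTheta 4 ξ (τ/2) * jTheta 3 ζ (τ/2) - jTheta 3 ξ (τ/2) * jTheta 4 ζ (τ/2)
      = 2 * jTheta 1 (ξ + ζ) τ * jTheta 1 (ξ - ζ) τ := by
  have hτ₂ : 0 < (τ / 2).im := by simpa using half_pos hτ
  have hsum := (summable_norm_jacobiTheta₂_term · hτ₂)
  simp only [jTheta_four_eq, jTheta_three_eq, jacobiTheta₂]
  rw [tsum_mul_tsum_sub_tsum_mul_tsum (hsum _) (hsum _) (hsum _) (hsum _),
    tsum_int_prod_eq_of_even_sum_eq_zero fun p hp ↦ sub_eq_zero.2 <|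
      jacobiTheta₂_term_add_half_mul_of_even hp ξ ζ _,
    mul_assoc, jTheta_one_mul_jTheta_one hτ, ← tsum_mul_left]
  refine tsum_congr fun p ↦ ?_
  rw [jacobiTheta₂_term_add_half_mul_eq_jTheta₁_term_mul,
    jacobiTheta₂_term_mul_add_half_eq_neg_jTheta₁_term_mul]
  ring
end

section
/- For all i, j ∈ {1,2}, every function f : ℂ → ℂ, every λ ∈ ℂ, and every z with θ₁(2z|τ) ≠ 0, (L_{ij}(−λ + ½(1+τ)) f)(z) = −e^{−πiτ + 4πiλ}·(L_{ji}(λ) f)(z); that is, L(−λ + ½(1+τ)) = −e^{−πiτ+4πiλ}·L^T(λ), where L^T denotes the transpose in the 2×2 matrix indices. -/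
/-- Sklyanin difference operator `s_a^{(ℓ)}` with parameters `τ, η` and spin `ℓ`. -/
noncomputable def sOp (τ η ℓ : ℂ) (a : ℕ) (f : ℂ → ℂ) (z : ℂ) : ℂ :=
  (jTheta (a+1) (2*z - 2*ℓ*η) τ * f (z + η)
    - jTheta (a+1) (-(2*z) - 2*ℓ*η) τ * f (z - η)) / jTheta 1 (2*z) τ

/-- Entries of the elliptic quantum L-operator `L(λ)` (indices in `Fin 2`). -/
noncomputable def LOp (τ η ℓ lam : ℂ) (i j : Fin 2) (f : ℂ → ℂ) (z : ℂ) : ℂ :=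
  if i = 0 then
    if j = 0 then
      (1/2) * (jTheta 1 (2*lam) τ * sOp τ η ℓ 0 f z + jTheta 4 (2*lam) τ * sOp τ η ℓ 3 f z)
    else
      (1/2) * (jTheta 2 (2*lam) τ * sOp τ η ℓ 1 f z + jTheta 3 (2*lam) τ * sOp τ η ℓ 2 f z)
  else
    if j = 0 then
      (1/2) * (jTheta 2 (2*lam) τ * sOp τ η ℓ 1 f z - jTheta 3 (2*lam) τ * sOp τ η ℓ 2 f z)
    else
      (1/2) * (jTheta 1 (2*lam) τ * sOp τ η ℓ 0 f z - jTheta 4 (2*lam) τ * sOp τ η ℓ 3 f z)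

private lemma tsum_equiv_mul' {c : ℂ} {F G : ℤ → ℂ} (e : ℤ ≃ ℤ)
    (h : ∀ k, F (e k) = c * G k) : ∑' k, F k = c * ∑' k, G k := by
  rw [← e.tsum_eq F]
  simp_rw [h]
  exact tsum_mul_left

private def negShift (m : ℤ) : ℤ ≃ ℤ :=
  ⟨fun k => -(k + m), fun k => -(k + m), fun k => by ring, fun k => by ring⟩

private lemma exp_eq_exp_mul (A B C : ℂ) (n : ℤ) (odd : Bool)
    (h : A = C + B + (if odd then 1 else 0) * (Real.pi : ℂ) * Complex.I
          + n * (2 * (Real.pi : ℂ) * Complex.I)) :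
    Complex.exp A = (if odd then -1 else 1) * Complex.exp C * Complex.exp B := by
  subst h
  cases odd <;>
    simp [Complex.exp_add, Complex.exp_int_mul_two_pi_mul_I, Complex.exp_pi_mul_I] <;> ring

private lemma jTheta3_shift (τ w : ℂ) :
    jTheta 3 (-w + 1 + τ) τ
      = Complex.exp (-((Real.pi : ℂ) * Complex.I * τ) + 2 * (Real.pi : ℂ) * Complex.I * w)
        * jTheta 3 w τ := by
  simp only [jTheta]
  refine tsum_equiv_mul' (negShift 1) (fun k => ?_)
  have := exp_eq_exp_mul
    ((Real.pi : ℂ) * Complex.I * τ * (((negShift 1 k : ℤ) : ℂ))^2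
      + 2 * (Real.pi : ℂ) * Complex.I * (-w + 1 + τ) * ((negShift 1 k : ℤ) : ℂ))
    ((Real.pi : ℂ) * Complex.I * τ * ((k : ℂ))^2 + 2 * (Real.pi : ℂ) * Complex.I * w * (k : ℂ))
    (-((Real.pi : ℂ) * Complex.I * τ) + 2 * (Real.pi : ℂ) * Complex.I * w)
    (-(k + 1)) false (by simp only [negShift, Equiv.coe_fn_mk]; push_cast; ring)
  simpa [negShift] using this

private lemma jTheta4_shift (τ w : ℂ) :
    jTheta 4 (-w + 1 + τ) τ
      = -(Complex.exp (-((Real.pi : ℂ) * Complex.I * τ) + 2 * (Real.pi : ℂ) * Complex.I * w))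
        * jTheta 4 w τ := by
  simp only [jTheta]
  have h : ∀ k : ℤ,
      Complex.exp ((Real.pi : ℂ) * Complex.I * τ * (((negShift 1 k : ℤ) : ℂ))^2
        + 2 * (Real.pi : ℂ) * Complex.I * ((-w + 1 + τ) + 1/2) * ((negShift 1 k : ℤ) : ℂ))
      = -(Complex.exp (-((Real.pi : ℂ) * Complex.I * τ) + 2 * (Real.pi : ℂ) * Complex.I * w))
        * Complex.exp ((Real.pi : ℂ) * Complex.I * τ * ((k : ℂ))^2
            + 2 * (Real.pi : ℂ) * Complex.I * (w + 1/2) * (k : ℂ)) := by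
    intro k
    have := exp_eq_exp_mul
      ((Real.pi : ℂ) * Complex.I * τ * (((negShift 1 k : ℤ) : ℂ))^2
        + 2 * (Real.pi : ℂ) * Complex.I * ((-w + 1 + τ) + 1/2) * ((negShift 1 k : ℤ) : ℂ))
      ((Real.pi : ℂ) * Complex.I * τ * ((k : ℂ))^2
        + 2 * (Real.pi : ℂ) * Complex.I * (w + 1/2) * (k : ℂ))
      (-((Real.pi : ℂ) * Complex.I * τ) + 2 * (Real.pi : ℂ) * Complex.I * w)
      (-2*k - 2) true (by simp only [negShift, Equiv.coe_fn_mk]; push_cast; ring)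
    rw [this, if_pos rfl]; ring
  exact tsum_equiv_mul' (negShift 1) h

private lemma jTheta2_shift (τ w : ℂ) :
    jTheta 2 (-w + 1 + τ) τ
      = -(Complex.exp (-((Real.pi : ℂ) * Complex.I * τ) + 2 * (Real.pi : ℂ) * Complex.I * w))
        * jTheta 2 w τ := by
  simp only [jTheta]
  have h : ∀ k : ℤ,
      Complex.exp ((Real.pi : ℂ) * Complex.I * τ * (((negShift 2 k : ℤ) : ℂ) + 1/2)^2
        + 2 * (Real.pi : ℂ) * Complex.I * (-w + 1 + τ) * (((negShift 2 k : ℤ) : ℂ) + 1/2))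
      = -(Complex.exp (-((Real.pi : ℂ) * Complex.I * τ) + 2 * (Real.pi : ℂ) * Complex.I * w))
        * Complex.exp ((Real.pi : ℂ) * Complex.I * τ * ((k : ℂ) + 1/2)^2
            + 2 * (Real.pi : ℂ) * Complex.I * w * ((k : ℂ) + 1/2)) := by
    intro k
    have := exp_eq_exp_mul
      ((Real.pi : ℂ) * Complex.I * τ * (((negShift 2 k : ℤ) : ℂ) + 1/2)^2
        + 2 * (Real.pi : ℂ) * Complex.I * (-w + 1 + τ) * (((negShift 2 k : ℤ) : ℂ) + 1/2))
      ((Real.pi : ℂ) * Complex.I * τ * ((k : ℂ) + 1/2)^2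
        + 2 * (Real.pi : ℂ) * Complex.I * w * ((k : ℂ) + 1/2))
      (-((Real.pi : ℂ) * Complex.I * τ) + 2 * (Real.pi : ℂ) * Complex.I * w)
      (-(k + 2)) true (by simp only [negShift, Equiv.coe_fn_mk]; push_cast; ring)
    rw [this, if_pos rfl]; ring
  exact tsum_equiv_mul' (negShift 2) h

private lemma jTheta1_shift (τ w : ℂ) :
    jTheta 1 (-w + 1 + τ) τ
      = -(Complex.exp (-((Real.pi : ℂ) * Complex.I * τ) + 2 * (Real.pi : ℂ) * Complex.I * w))
        * jTheta 1 w τ := by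
  simp only [jTheta]
  have h : ∀ k : ℤ,
      Complex.exp ((Real.pi : ℂ) * Complex.I * τ * (((negShift 2 k : ℤ) : ℂ) + 1/2)^2
        + 2 * (Real.pi : ℂ) * Complex.I * ((-w + 1 + τ) + 1/2) * (((negShift 2 k : ℤ) : ℂ) + 1/2))
      = -(Complex.exp (-((Real.pi : ℂ) * Complex.I * τ) + 2 * (Real.pi : ℂ) * Complex.I * w))
        * Complex.exp ((Real.pi : ℂ) * Complex.I * τ * ((k : ℂ) + 1/2)^2
            + 2 * (Real.pi : ℂ) * Complex.I * (w + 1/2) * ((k : ℂ) + 1/2)) := by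
    intro k
    have := exp_eq_exp_mul
      ((Real.pi : ℂ) * Complex.I * τ * (((negShift 2 k : ℤ) : ℂ) + 1/2)^2
        + 2 * (Real.pi : ℂ) * Complex.I * ((-w + 1 + τ) + 1/2) * (((negShift 2 k : ℤ) : ℂ) + 1/2))
      ((Real.pi : ℂ) * Complex.I * τ * ((k : ℂ) + 1/2)^2
        + 2 * (Real.pi : ℂ) * Complex.I * (w + 1/2) * ((k : ℂ) + 1/2))
      (-((Real.pi : ℂ) * Complex.I * τ) + 2 * (Real.pi : ℂ) * Complex.I * w)
      (-2*k - 3) true (by simp only [negShift, Equiv.coe_fn_mk]; push_cast; ring)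
    rw [this, if_pos rfl]; ring
  rw [tsum_equiv_mul' (negShift 2) h]
  ring

/-- `L(−λ + ½(1+τ)) = −e^{−πiτ+4πiλ}·L^T(λ)`, entrywise. -/
theorem LOp_transpose_symmetry (τ η ℓ lam : ℂ) (hτ : 0 < τ.im) (i j : Fin 2)
    (f : ℂ → ℂ) (z : ℂ) (hz : jTheta 1 (2*z) τ ≠ 0) :
    LOp τ η ℓ (-lam + (1 + τ)/2) i j f z
      = -Complex.exp (-((Real.pi : ℂ) * Complex.I * τ) + 4 * (Real.pi : ℂ) * Complex.I * lam)
          * LOp τ η ℓ lam j i f z := by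
  have harg : 2 * (-lam + (1 + τ)/2) = -(2*lam) + 1 + τ := by ring
  have hq : Complex.exp (-((Real.pi : ℂ) * Complex.I * τ)
        + 2 * (Real.pi : ℂ) * Complex.I * (2*lam))
      = Complex.exp (-((Real.pi : ℂ) * Complex.I * τ)
        + 4 * (Real.pi : ℂ) * Complex.I * lam) := by
    congr 1; ring
  fin_cases i <;> fin_cases j <;>
    simp only [LOp, Fin.ext_iff, Fin.val_zero, Fin.val_one, Fin.isValue] <;>
    norm_num <;>
    rw [harg] <;>
    simp only [jTheta1_shift, jTheta2_shift, jTheta3_shift, jTheta4_shift, hq] <;>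
    ring
end

section
/- For every a ∈ {0,1,2,3} and all z, η, ℓ, k ∈ ℂ the following theta-function identity holds: θ₁(2(ℓ+k+1)η|τ)·θ_{a+1}(2z+2(ℓ+1)η|τ)·θ₁(2z+4kη|τ)·θ₁(2z−2(ℓ−k+1)η|τ) + θ₁(2(ℓ−k+1)η|τ)·θ_{a+1}(−2z+2(ℓ+1)η|τ)·θ₁(2z+4kη|τ)·θ₁(2z+2(ℓ+k+1)η|τ) = θ₁(2(ℓ+k+1)η|τ)·θ_{a+1}(2z+2(2k−ℓ−1)η|τ)·θ₁(2z|τ)·θ₁(2z+2(ℓ+k+1)η|τ) + θ₁(2(ℓ−k+1)η|τ)·θ_{a+1}(−2z−2(2k+ℓ+1)η|τ)·θ₁(2z|τ)·θ₁(2z−2(ℓ−k+1)η|τ). -/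
open Complex MeasureTheory intervalIntegral

noncomputable section


def Tterm (τ a w : ℂ) (n : ℤ) : ℂ :=
  Complex.exp ((Real.pi : ℂ) * I * τ * ((n : ℂ) + a) ^ 2
    + 2 * (Real.pi : ℂ) * I * ((n : ℂ) + a) * w)

def TT (τ a w : ℂ) : ℂ := ∑' n : ℤ, Tterm τ a w n

lemma Tterm_eq (τ a w : ℂ) (n : ℤ) :
    Tterm τ a w n = Complex.exp ((Real.pi : ℂ) * I * τ * a ^ 2 + 2 * (Real.pi : ℂ) * I * a * w)
      * jacobiTheta₂_term n (w + a * τ) τ := by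
  rw [Tterm, jacobiTheta₂_term, ← Complex.exp_add]
  congr 1
  push_cast
  ring

lemma summable_norm_Tterm {τ : ℂ} (hτ : 0 < τ.im) (a w : ℂ) :
    Summable fun n : ℤ => ‖Tterm τ a w n‖ := by
  have hb := summable_pow_mul_jacobiTheta₂_term_bound |(w + a * τ).im| hτ 0
  have hb' := hb.mul_left ‖Complex.exp ((Real.pi : ℂ) * I * τ * a ^ 2 + 2 * (Real.pi : ℂ) * I * a * w)‖
  apply Summable.of_nonneg_of_le (fun n => norm_nonneg _) _ hb'
  intro n
  rw [Tterm_eq, norm_mul]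
  refine mul_le_mul_of_nonneg_left ?_ (norm_nonneg _)
  have := norm_jacobiTheta₂_term_le hτ (le_refl |(w + a * τ).im|) (le_refl τ.im) n
  simpa [pow_zero, one_mul] using this

lemma summable_Tterm {τ : ℂ} (hτ : 0 < τ.im) (a w : ℂ) :
    Summable fun n : ℤ => Tterm τ a w n :=
  (summable_norm_Tterm hτ a w).of_norm

lemma hasSum_TT {τ : ℂ} (hτ : 0 < τ.im) (a w : ℂ) :
    HasSum (Tterm τ a w) (TT τ a w) :=
  (summable_Tterm hτ a w).hasSum

lemma TT_eq_jacobiTheta₂ (τ a w : ℂ) :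
    TT τ a w = Complex.exp ((Real.pi : ℂ) * I * τ * a ^ 2 + 2 * (Real.pi : ℂ) * I * a * w)
      * jacobiTheta₂ (w + a * τ) τ := by
  rw [TT, jacobiTheta₂, ← tsum_mul_left]
  exact tsum_congr (Tterm_eq τ a w)

lemma TT_congr {τ a w a' w' : ℂ} (ha : a = a') (hw : w = w') : TT τ a w = TT τ a' w' := by
  rw [ha, hw]

lemma TT_neg (τ a w : ℂ) : TT τ (-a) w = TT τ a (-w) := by
  rw [TT, TT, ← (Equiv.neg ℤ).tsum_eq (Tterm τ a (-w))]
  apply tsum_congr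
  intro n
  simp only [Equiv.neg_apply, Tterm]
  congr 1
  push_cast
  ring

lemma TT_add_one (τ a w : ℂ) : TT τ (a + 1) w = TT τ a w := by
  rw [TT, TT, ← (Equiv.addRight (1 : ℤ)).tsum_eq (Tterm τ a w)]
  apply tsum_congr
  intro n
  simp only [Equiv.coe_addRight, Tterm]
  congr 1
  push_cast
  ring

lemma TT_w_add_one (τ a w : ℂ) :
    TT τ a (w + 1) = Complex.exp (2 * (Real.pi : ℂ) * I * a) * TT τ a w := by
  rw [TT, TT, ← tsum_mul_left]
  apply tsum_congr
  intro n
  rw [Tterm, Tterm, ← Complex.exp_add]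
  rw [show (Real.pi : ℂ) * I * τ * ((n : ℂ) + a) ^ 2 + 2 * (Real.pi : ℂ) * I * ((n : ℂ) + a) * (w + 1)
      = (2 * (Real.pi : ℂ) * I * a + ((Real.pi : ℂ) * I * τ * ((n : ℂ) + a) ^ 2
        + 2 * (Real.pi : ℂ) * I * ((n : ℂ) + a) * w)) + (n : ℂ) * (2 * (Real.pi : ℂ) * I) by ring]
  rw [Complex.exp_add, Complex.exp_int_mul_two_pi_mul_I, mul_one]

lemma two_tau_im {τ : ℂ} (hτ : 0 < τ.im) : 0 < (2 * τ).im := by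
  simp only [Complex.mul_im, Complex.re_ofNat, Complex.im_ofNat, zero_mul, add_zero]
  linarith

lemma TT_mul_TT {τ : ℂ} (hτ : 0 < τ.im) (a₁ a₂ w₁ w₂ : ℂ) :
    TT τ a₁ w₁ * TT τ a₂ w₂ =
      TT (2 * τ) ((a₁ + a₂) / 2) (w₁ + w₂) * TT (2 * τ) ((a₁ - a₂) / 2) (w₁ - w₂)
      + TT (2 * τ) ((a₁ + a₂ + 1) / 2) (w₁ + w₂) * TT (2 * τ) ((a₁ - a₂ + 1) / 2) (w₁ - w₂) := by
  have h2τ : 0 < (2 * τ).im := two_tau_im hτ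
  set T : ℤ × ℤ → ℂ := fun mn => Tterm τ a₁ w₁ mn.1 * Tterm τ a₂ w₂ mn.2 with hT
  have hsum : HasSum T (TT τ a₁ w₁ * TT τ a₂ w₂) := by
    exact (hasSum_TT hτ a₁ w₁).mul (hasSum_TT hτ a₂ w₂)
      (((summable_norm_Tterm hτ a₁ w₁).mul_norm (summable_norm_Tterm hτ a₂ w₂)).of_norm)
  -- even part
  have hE : HasSum (fun rt : ℤ × ℤ =>
      Tterm (2 * τ) ((a₁ + a₂) / 2) (w₁ + w₂) rt.1 * Tterm (2 * τ) ((a₁ - a₂) / 2) (w₁ - w₂) rt.2)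
      (TT (2 * τ) ((a₁ + a₂) / 2) (w₁ + w₂) * TT (2 * τ) ((a₁ - a₂) / 2) (w₁ - w₂)) :=
    (hasSum_TT h2τ _ _).mul (hasSum_TT h2τ _ _)
      (((summable_norm_Tterm h2τ _ _).mul_norm (summable_norm_Tterm h2τ _ _)).of_norm)
  have hO : HasSum (fun rt : ℤ × ℤ =>
      Tterm (2 * τ) ((a₁ + a₂ + 1) / 2) (w₁ + w₂) rt.1
        * Tterm (2 * τ) ((a₁ - a₂ + 1) / 2) (w₁ - w₂) rt.2)
      (TT (2 * τ) ((a₁ + a₂ + 1) / 2) (w₁ + w₂) * TT (2 * τ) ((a₁ - a₂ + 1) / 2) (w₁ - w₂)) :=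
    (hasSum_TT h2τ _ _).mul (hasSum_TT h2τ _ _)
      (((summable_norm_Tterm h2τ _ _).mul_norm (summable_norm_Tterm h2τ _ _)).of_norm)
  set Fe : ℤ × ℤ → ℂ := fun mn => if Even (mn.1 + mn.2) then T mn else 0 with hFe
  set Fo : ℤ × ℤ → ℂ := fun mn => if Even (mn.1 + mn.2) then 0 else T mn with hFo
  set gE : ℤ × ℤ → ℤ × ℤ := fun rt => (rt.1 + rt.2, rt.1 - rt.2) with hgE
  set gO : ℤ × ℤ → ℤ × ℤ := fun rt => (rt.1 + rt.2 + 1, rt.1 - rt.2) with hgO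
  have hgEinj : Function.Injective gE := by
    intro x y h
    simp only [hgE, Prod.mk.injEq] at h
    have : x.1 = y.1 ∧ x.2 = y.2 := by omega
    exact Prod.ext this.1 this.2
  have hgOinj : Function.Injective gO := by
    intro x y h
    simp only [hgO, Prod.mk.injEq] at h
    have : x.1 = y.1 ∧ x.2 = y.2 := by omega
    exact Prod.ext this.1 this.2
  have hgEvan : ∀ x ∉ Set.range gE, Fe x = 0 := by
    intro x hx
    simp only [hFe]
    rw [if_neg]
    intro hev
    obtain ⟨k, hk⟩ := hev
    refine hx ⟨(k, x.1 - k), ?_⟩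
    simp only [hgE]
    rw [Prod.ext_iff]
    constructor <;> simp <;> omega
  have hgOvan : ∀ x ∉ Set.range gO, Fo x = 0 := by
    intro x hx
    simp only [hFo]
    rw [if_pos]
    by_contra hev
    rw [Int.not_even_iff_odd] at hev
    obtain ⟨k, hk⟩ := hev
    refine hx ⟨(k, x.1 - 1 - k), ?_⟩
    simp only [hgO]
    rw [Prod.ext_iff]
    constructor <;> simp <;> omega
  have hcompE : ∀ rt : ℤ × ℤ, Fe (gE rt) =
      Tterm (2 * τ) ((a₁ + a₂) / 2) (w₁ + w₂) rt.1
        * Tterm (2 * τ) ((a₁ - a₂) / 2) (w₁ - w₂) rt.2 := by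
    rintro ⟨r, t⟩
    simp only [hFe, hgE]
    rw [if_pos ⟨r, by ring⟩]
    simp only [hT, Tterm]
    rw [← Complex.exp_add, ← Complex.exp_add]
    congr 1
    push_cast
    ring
  have hcompO : ∀ rt : ℤ × ℤ, Fo (gO rt) =
      Tterm (2 * τ) ((a₁ + a₂ + 1) / 2) (w₁ + w₂) rt.1
        * Tterm (2 * τ) ((a₁ - a₂ + 1) / 2) (w₁ - w₂) rt.2 := by
    rintro ⟨r, t⟩
    simp only [hFo, hgO]
    rw [if_neg (by rw [Int.not_even_iff_odd]; exact ⟨r, by ring⟩)]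
    simp only [hT, Tterm]
    rw [← Complex.exp_add, ← Complex.exp_add]
    congr 1
    push_cast
    ring
  have hFeSum : HasSum Fe (TT (2 * τ) ((a₁ + a₂) / 2) (w₁ + w₂)
      * TT (2 * τ) ((a₁ - a₂) / 2) (w₁ - w₂)) := by
    rw [← hgEinj.hasSum_iff hgEvan]
    exact hE.congr_fun fun rt => hcompE rt
  have hFoSum : HasSum Fo (TT (2 * τ) ((a₁ + a₂ + 1) / 2) (w₁ + w₂)
      * TT (2 * τ) ((a₁ - a₂ + 1) / 2) (w₁ - w₂)) := by
    rw [← hgOinj.hasSum_iff hgOvan]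
    exact hO.congr_fun fun rt => hcompO rt
  have htot := hFeSum.add hFoSum
  have : ∀ mn : ℤ × ℤ, Fe mn + Fo mn = T mn := by
    intro mn
    simp only [hFe, hFo]
    by_cases h : Even (mn.1 + mn.2) <;> simp [h]
  exact hsum.unique (htot.congr_fun fun mn => (this mn).symm)

lemma Tdec (τ al be : ℂ) (hτ : 0 < τ.im) (s d A B : ℂ) (hA : A = s + d) (hB : B = s - d) :
    TT τ al (A + be) * TT τ (1/2) (B + 1/2) =
      TT (2*τ) ((al + 1/2)/2) (2*s + be + 1/2) * TT (2*τ) ((al - 1/2)/2) (2*d + be - 1/2)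
      + TT (2*τ) ((al + 1/2 + 1)/2) (2*s + be + 1/2)
        * TT (2*τ) ((al - 1/2 + 1)/2) (2*d + be - 1/2) := by
  subst hA hB
  rw [TT_mul_TT hτ al (1/2) (s + d + be) (s - d + 1/2)]
  congr 1 <;> congr 1 <;> exact TT_congr (by ring) (by ring)

open Real in
/-- the W-lemma: `g(v-u) f(u+v)` as antisymmetric combination -/

lemma TW (τ al be : ℂ) (hτ : 0 < τ.im) (u v U V : ℂ) (hU : U = v - u) (hV : V = u + v) :
    TT τ (1/2) (U + 1/2) * TT τ al (V + be) =
      Complex.exp ((π : ℂ) * I * (al - 1/2)) *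
        (TT (2*τ) ((al - 1/2 + 1)/2) (2*u + be - 1/2) * TT (2*τ) ((al - 1/2)/2) (2*v + be - 1/2)
         - TT (2*τ) ((al - 1/2)/2) (2*u + be - 1/2)
           * TT (2*τ) ((al - 1/2 + 1)/2) (2*v + be - 1/2)) := by
  subst hU hV
  have L := TT_mul_TT hτ (1/2) al (v - u + 1/2) (u + v + be)
  -- factor (ρ=0, first)
  rw [show TT (2*τ) ((1/2 + al)/2) (v - u + 1/2 + (u + v + be))
      = TT (2*τ) ((al - 1/2 + 1)/2) ((2*v + be - 1/2) + 1) from TT_congr (by ring) (by ring),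
    TT_w_add_one] at L
  -- factor (ρ=0, second)
  rw [show TT (2*τ) ((1/2 - al)/2) (v - u + 1/2 - (u + v + be))
      = TT (2*τ) (-((al - 1/2)/2)) (-(2*u + be - 1/2)) from TT_congr (by ring) (by ring),
    TT_neg, neg_neg] at L
  -- factor (ρ=1, first)
  rw [show TT (2*τ) ((1/2 + al + 1)/2) (v - u + 1/2 + (u + v + be))
      = TT (2*τ) ((al - 1/2)/2 + 1) ((2*v + be - 1/2) + 1) from TT_congr (by ring) (by ring),
    TT_add_one, TT_w_add_one] at L
  -- factor (ρ=1, second)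
  rw [show TT (2*τ) ((1/2 - al + 1)/2) (v - u + 1/2 - (u + v + be))
      = TT (2*τ) (-((al - 1/2 + 1)/2) + 1) (-(2*u + be - 1/2)) from TT_congr (by ring) (by ring),
    TT_add_one, TT_neg, neg_neg] at L
  have hph1 : Complex.exp (2 * (π : ℂ) * I * ((al - 1/2 + 1)/2))
      = -Complex.exp ((π : ℂ) * I * (al - 1/2)) := by
    rw [show 2 * (π : ℂ) * I * ((al - 1/2 + 1)/2) = (π : ℂ) * I * (al - 1/2) + π * I by ring,
      Complex.exp_add, Complex.exp_pi_mul_I]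
    ring
  have hph2 : Complex.exp (2 * (π : ℂ) * I * ((al - 1/2)/2))
      = Complex.exp ((π : ℂ) * I * (al - 1/2)) := by
    congr 1
    ring
  rw [hph1, hph2] at L
  linear_combination L

open Real in

open Real in
lemma Tfneg (τ al be : ℂ) (hal : al = 0 ∨ al = 1/2) (hbe : be = 0 ∨ be = 1/2) (w W : ℂ) (hW : W = -w) :
    TT τ al (W + be) = Complex.exp (-(4 * (π : ℂ) * I * al * be)) * TT τ al (w + be) := by
  subst hW
  have key : TT τ al (-w + be) = TT τ al (w - be) := by
    rw [TT_congr (rfl : al = al) (show -w + be = -(w - be) by ring)]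
    rcases hal with rfl | rfl
    · have h := TT_neg τ 0 (w - be)
      rw [neg_zero] at h
      exact h.symm
    · have h := TT_neg τ (1/2) (w - be)
      have h2 := TT_add_one τ (-(1/2) : ℂ) (w - be)
      rw [show (-(1/2) : ℂ) + 1 = 1/2 by ring] at h2
      rw [← h, ← h2]
  rw [key]
  rcases hbe with rfl | rfl
  · rw [show -(4 * (π : ℂ) * I * al * 0) = 0 by ring, Complex.exp_zero, one_mul]
    exact TT_congr rfl (by ring)
  · have h3 := TT_w_add_one τ al (w - 1/2)
    rw [show w - (1/2 : ℂ) + 1 = w + 1/2 by ring] at h3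
    rw [h3, ← mul_assoc, ← Complex.exp_add]
    rcases hal with rfl | rfl
    · rw [show -(4 * (π : ℂ) * I * 0 * (1/2)) + 2 * π * I * 0 = 0 by ring, Complex.exp_zero, one_mul]
    · rw [show -(4 * (π : ℂ) * I * (1/2) * (1/2)) + 2 * π * I * (1/2) = 0 by ring,
        Complex.exp_zero, one_mul]

lemma TT_differentiable {τ : ℂ} (hτ : 0 < τ.im) (a : ℂ) :
    Differentiable ℂ (fun w => TT τ a w) := by
  have h1 : Differentiable ℂ (fun w : ℂ => Complex.exp
      ((Real.pi : ℂ) * I * τ * a ^ 2 + 2 * (Real.pi : ℂ) * I * a * w)) := by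
    apply Differentiable.cexp
    fun_prop
  have h2 : Differentiable ℂ (fun w : ℂ => jacobiTheta₂ (w + a * τ) τ) := by
    intro w
    exact (differentiableAt_jacobiTheta₂_fst (w + a * τ) hτ).comp w
      ((differentiable_id.add_const _) w)
  have heq : (fun w => TT τ a w) = fun w : ℂ =>
      Complex.exp ((Real.pi : ℂ) * I * τ * a ^ 2 + 2 * (Real.pi : ℂ) * I * a * w)
        * jacobiTheta₂ (w + a * τ) τ := funext (TT_eq_jacobiTheta₂ τ a)
  rw [heq]
  exact h1.mul h2

lemma integral_jacobiTheta₂_term (n : ℤ) (τ : ℂ) (hn : n ≠ 0) :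
    ∫ t in (0:ℝ)..1, jacobiTheta₂_term n (t : ℂ) τ = 0 := by
  have : ∀ t : ℝ, jacobiTheta₂_term n (t : ℂ) τ
      = Complex.exp ((Real.pi : ℂ) * I * n ^ 2 * τ) * Complex.exp ((2 * (Real.pi : ℂ) * I * n) * t) := by
    intro t
    rw [jacobiTheta₂_term, ← Complex.exp_add]
    congr 1
    push_cast
    ring
  rw [intervalIntegral.integral_congr (g := fun t : ℝ =>
      Complex.exp ((Real.pi : ℂ) * I * n ^ 2 * τ) * Complex.exp ((2 * (Real.pi : ℂ) * I * n) * t))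
      (fun t _ => this t)]
  rw [intervalIntegral.integral_const_mul]
  have hc : (2 * (Real.pi : ℂ) * I * n) ≠ 0 := by
    simp [Real.pi_ne_zero, Complex.I_ne_zero, hn]
  rw [integral_exp_mul_complex hc]
  have h1 : Complex.exp (2 * (Real.pi : ℂ) * I * n * (1:ℝ)) = 1 := by
    rw [show (2 * (Real.pi : ℂ) * I * n * (1:ℝ)) = (n : ℂ) * (2 * Real.pi * I) by push_cast; ring]
    exact Complex.exp_int_mul_two_pi_mul_I n
  have h0 : Complex.exp (2 * (Real.pi : ℂ) * I * n * (0:ℝ)) = 1 := by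
    norm_num
  rw [h1, h0]
  simp

lemma jacobiTheta₂_exists_ne_zero {τ : ℂ} (hτ : 0 < τ.im) :
    ∃ z : ℂ, jacobiTheta₂ z τ ≠ 0 := by
  by_contra h
  push_neg at h
  have hint : ∫ t in (0:ℝ)..1, jacobiTheta₂ (t : ℂ) τ = 0 := by
    simp [h]
  have hswap : ∫ t in (0:ℝ)..1, jacobiTheta₂ (t : ℂ) τ
      = ∑' n : ℤ, ∫ t in (0:ℝ)..1, jacobiTheta₂_term n (t : ℂ) τ := by
    simp only [intervalIntegral.integral_of_le (by norm_num : (0:ℝ) ≤ 1)]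
    have hmeas : ∀ n : ℤ, Integrable (fun t : ℝ => jacobiTheta₂_term n (t : ℂ) τ)
        (volume.restrict (Set.Ioc (0:ℝ) 1)) := by
      intro n
      apply Continuous.integrableOn_Ioc
      unfold jacobiTheta₂_term
      fun_prop
    have hnorm : Summable (fun n : ℤ =>
        ∫ t in Set.Ioc (0:ℝ) 1, ‖jacobiTheta₂_term n (t : ℂ) τ‖) := by
      have : ∀ n : ℤ, ∫ t in Set.Ioc (0:ℝ) 1, ‖jacobiTheta₂_term n (t : ℂ) τ‖
          = Real.exp (-Real.pi * n ^ 2 * τ.im) := by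
        intro n
        have : ∀ t : ℝ, ‖jacobiTheta₂_term n (t : ℂ) τ‖ = Real.exp (-Real.pi * n ^ 2 * τ.im) := by
          intro t
          rw [norm_jacobiTheta₂_term]
          norm_num
        rw [setIntegral_congr_fun measurableSet_Ioc (fun t _ => this t)]
        simp
      rw [funext this]
      have hb := summable_pow_mul_jacobiTheta₂_term_bound 0 hτ 0
      apply hb.congr
      intro n
      simp [Real.exp_eq_exp]
      ring
    have hsw := MeasureTheory.integral_tsum_of_summable_integral_norm hmeas hnorm
    calc ∫ t in Set.Ioc (0:ℝ) 1, jacobiTheta₂ (t : ℂ) τ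
        = ∫ t in Set.Ioc (0:ℝ) 1, ∑' n : ℤ, jacobiTheta₂_term n (t : ℂ) τ := by
          simp only [jacobiTheta₂]
      _ = ∑' n : ℤ, ∫ t in Set.Ioc (0:ℝ) 1, jacobiTheta₂_term n (t : ℂ) τ := hsw.symm
  have h0 : ∀ n : ℤ, n ≠ 0 → ∫ t in (0:ℝ)..1, jacobiTheta₂_term n (t : ℂ) τ = 0 :=
    fun n hn => integral_jacobiTheta₂_term n τ hn
  have : ∑' n : ℤ, ∫ t in (0:ℝ)..1, jacobiTheta₂_term n (t : ℂ) τ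
      = ∫ t in (0:ℝ)..1, jacobiTheta₂_term 0 (t : ℂ) τ := by
    apply tsum_eq_single
    exact fun n hn => h0 n hn
  rw [this] at hswap
  have : ∫ t in (0:ℝ)..1, jacobiTheta₂_term 0 (t : ℂ) τ = 1 := by
    have : ∀ t : ℝ, jacobiTheta₂_term 0 (t : ℂ) τ = 1 := by
      intro t
      rw [jacobiTheta₂_term]
      norm_num
    rw [intervalIntegral.integral_congr (fun t _ => this t)]
    simp
  rw [this] at hswap
  rw [hint] at hswap
  exact one_ne_zero hswap.symm

lemma mainE (τ : ℂ) (hτ : 0 < τ.im) (al be : ℂ)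
    (hal : al = 0 ∨ al = 1/2) (hbe : be = 0 ∨ be = 1/2)
    (x p q G1 G2 C1 C2 E1 E2 A1 A2 A3 A4 : ℂ)
    (hG1 : G1 = p + q) (hG2 : G2 = p - q) (hC1 : C1 = x + q) (hC2 : C2 = x - q)
    (hE1 : E1 = x - p) (hE2 : E2 = x + p)
    (hA1 : A1 = x + p - q) (hA2 : A2 = p + q - x) (hA3 : A3 = x + q - p)
    (hA4 : A4 = -x - p - q) :
    TT τ (1/2) (G1 + 1/2) * TT τ al (A1 + be) * TT τ (1/2) (C1 + 1/2) * TT τ (1/2) (E1 + 1/2)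
    + TT τ (1/2) (G2 + 1/2) * TT τ al (A2 + be) * TT τ (1/2) (C1 + 1/2) * TT τ (1/2) (E2 + 1/2)
    = TT τ (1/2) (G1 + 1/2) * TT τ al (A3 + be) * TT τ (1/2) (C2 + 1/2) * TT τ (1/2) (E2 + 1/2)
    + TT τ (1/2) (G2 + 1/2) * TT τ al (A4 + be) * TT τ (1/2) (C2 + 1/2)
      * TT τ (1/2) (E1 + 1/2) := by
  subst hG1 hG2 hC1 hC2 hE1 hE2 hA1 hA2 hA3 hA4
  set B : ℂ → ℂ := fun t =>
    TT τ (1/2) (t + q + 1/2) * TT τ al (x + t - q + be) * TT τ (1/2) (x + q + 1/2)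
      * TT τ (1/2) (x - t + 1/2)
    + TT τ (1/2) (t - q + 1/2) * TT τ al (t + q - x + be) * TT τ (1/2) (x + q + 1/2)
      * TT τ (1/2) (x + t + 1/2)
    - TT τ (1/2) (t + q + 1/2) * TT τ al (x + q - t + be) * TT τ (1/2) (x - q + 1/2)
      * TT τ (1/2) (x + t + 1/2)
    - TT τ (1/2) (t - q + 1/2) * TT τ al (-x - t - q + be) * TT τ (1/2) (x - q + 1/2)
      * TT τ (1/2) (x - t + 1/2) with hB
  suffices hkey : ∀ t : ℂ, B t = 0 by
    have h := hkey p
    simp only [hB] at h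
    linear_combination h
  -- the multiplied identity
  have hε2 : Complex.exp (-(4 * (Real.pi : ℂ) * I * al * be))
      * Complex.exp (-(4 * (Real.pi : ℂ) * I * al * be)) = 1 := by
    rw [← Complex.exp_add]
    rcases hal with rfl | rfl <;> rcases hbe with rfl | rfl
    · rw [show -(4 * (Real.pi : ℂ) * I * 0 * 0) + -(4 * (Real.pi : ℂ) * I * 0 * 0) = 0 by ring,
        Complex.exp_zero]
    · rw [show -(4 * (Real.pi : ℂ) * I * 0 * (1/2)) + -(4 * (Real.pi : ℂ) * I * 0 * (1/2)) = 0
        by ring, Complex.exp_zero]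
    · rw [show -(4 * (Real.pi : ℂ) * I * (1/2) * 0) + -(4 * (Real.pi : ℂ) * I * (1/2) * 0) = 0
        by ring, Complex.exp_zero]
    · rw [show -(4 * (Real.pi : ℂ) * I * (1/2) * (1/2))
          + -(4 * (Real.pi : ℂ) * I * (1/2) * (1/2)) = ((-1 : ℤ) : ℂ) * (2 * Real.pi * I) by
        push_cast; ring]
      exact Complex.exp_int_mul_two_pi_mul_I (-1)
  have key : ∀ t : ℂ, TT τ al (t + be) * B t = 0 := by
    intro t
    simp only [hB]
    have gneg : TT τ (1/2) (q - t + 1/2) = -TT τ (1/2) (t - q + 1/2) := by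
      have h := Tfneg τ (1/2) (1/2) (Or.inr rfl) (Or.inr rfl) (t - q) (q - t) (by ring)
      rw [show -(4 * (Real.pi : ℂ) * I * (1/2) * (1/2)) = -((Real.pi : ℂ) * I) by ring,
        Complex.exp_neg, Complex.exp_pi_mul_I] at h
      norm_num at h
      exact h
    have n1 := Tfneg τ al be hal hbe t (-t) rfl
    have n2 := Tfneg τ al be hal hbe q (-q) rfl
    have n5 := Tfneg τ al be hal hbe (x - t - q) (t + q - x) (by ring)
    have n6 := Tfneg τ al be hal hbe (x + t + q) (-x - t - q) (by ring)
    have hd11 := Tdec τ al be hτ (x - q/2) (t - q/2) (x + t - q) (x - t) (by ring) (by ring)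
    have hd12 := Tdec τ al be hτ (x - q/2) (-t - q/2) (x - t - q) (x + t) (by ring) (by ring)
    have hd13 := Tdec τ al be hτ (x - q/2) (q/2) x (x - q) (by ring) (by ring)
    have hd21 := Tdec τ al be hτ (x + q/2) (q/2 - t) (x + q - t) (x + t) (by ring) (by ring)
    have hd22 := Tdec τ al be hτ (x + q/2) (t + q/2) (x + t + q) (x - t) (by ring) (by ring)
    have hd23 := Tdec τ al be hτ (x + q/2) (-q/2) x (x + q) (by ring) (by ring)
    have A1 := TW τ al be hτ (-t - q/2) (q/2) (t + q) (-t) (by ring) (by ring)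
    have A2 := TW τ al be hτ (t - q/2) (q/2) (q - t) t (by ring) (by ring)
    have A3 := TW τ al be hτ (t - q/2) (-t - q/2) (-(2*t)) (-q) (by ring) (by ring)
    have B1 := TW τ al be hτ (-q/2) (t + q/2) (t + q) t (by ring) (by ring)
    have B2 := TW τ al be hτ (-q/2) (q/2 - t) (q - t) (-t) (by ring) (by ring)
    have B3 := TW τ al be hτ (t + q/2) (q/2 - t) (-(2*t)) q (by ring) (by ring)
    rw [n1] at A1
    rw [gneg] at A2
    rw [n2] at A3
    rw [gneg, n1] at B2
    rw [n5, n6]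
    -- abbreviations (as plain terms, for readability of the combination)
    have e1 : TT τ al (t + be) * TT τ (1/2) (t + q + 1/2)
        = Complex.exp (-(4 * (Real.pi : ℂ) * I * al * be))
          * (Complex.exp ((Real.pi : ℂ) * I * (al - 1/2)) *
            (TT (2*τ) ((al - 1/2 + 1)/2) (2*(-t - q/2) + be - 1/2)
              * TT (2*τ) ((al - 1/2)/2) (2*(q/2) + be - 1/2)
             - TT (2*τ) ((al - 1/2)/2) (2*(-t - q/2) + be - 1/2)
              * TT (2*τ) ((al - 1/2 + 1)/2) (2*(q/2) + be - 1/2))) := by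
      linear_combination Complex.exp (-(4 * (Real.pi : ℂ) * I * al * be)) * A1
        - (TT τ al (t + be) * TT τ (1/2) (t + q + 1/2)) * hε2
    have e2 : TT τ al (t + be) * TT τ (1/2) (t - q + 1/2)
        = -(Complex.exp ((Real.pi : ℂ) * I * (al - 1/2)) *
            (TT (2*τ) ((al - 1/2 + 1)/2) (2*(t - q/2) + be - 1/2)
              * TT (2*τ) ((al - 1/2)/2) (2*(q/2) + be - 1/2)
             - TT (2*τ) ((al - 1/2)/2) (2*(t - q/2) + be - 1/2)
              * TT (2*τ) ((al - 1/2 + 1)/2) (2*(q/2) + be - 1/2))) := by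
      linear_combination -A2
    have e3 : TT τ al (q + be) * TT τ (1/2) (-(2*t) + 1/2)
        = Complex.exp (-(4 * (Real.pi : ℂ) * I * al * be))
          * (Complex.exp ((Real.pi : ℂ) * I * (al - 1/2)) *
            (TT (2*τ) ((al - 1/2 + 1)/2) (2*(t - q/2) + be - 1/2)
              * TT (2*τ) ((al - 1/2)/2) (2*(-t - q/2) + be - 1/2)
             - TT (2*τ) ((al - 1/2)/2) (2*(t - q/2) + be - 1/2)
              * TT (2*τ) ((al - 1/2 + 1)/2) (2*(-t - q/2) + be - 1/2))) := by
      linear_combination Complex.exp (-(4 * (Real.pi : ℂ) * I * al * be)) * A3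
        - (TT τ al (q + be) * TT τ (1/2) (-(2*t) + 1/2)) * hε2
    have e5 : Complex.exp (-(4 * (Real.pi : ℂ) * I * al * be))
          * (TT τ al (t + be) * TT τ (1/2) (t - q + 1/2))
        = -(Complex.exp ((Real.pi : ℂ) * I * (al - 1/2)) *
            (TT (2*τ) ((al - 1/2 + 1)/2) (2*(-q/2) + be - 1/2)
              * TT (2*τ) ((al - 1/2)/2) (2*(q/2 - t) + be - 1/2)
             - TT (2*τ) ((al - 1/2)/2) (2*(-q/2) + be - 1/2)
              * TT (2*τ) ((al - 1/2 + 1)/2) (2*(q/2 - t) + be - 1/2))) := by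
      linear_combination -B2
    -- K1
    have K1 : TT τ al (t + be) *
        (TT τ (1/2) (t + q + 1/2) * (TT τ al (x + t - q + be) * TT τ (1/2) (x - t + 1/2))
         + TT τ (1/2) (t - q + 1/2) * (Complex.exp (-(4 * (Real.pi : ℂ) * I * al * be))
            * (TT τ al (x - t - q + be) * TT τ (1/2) (x + t + 1/2))))
        = -((TT τ al (q + be) * TT τ (1/2) (-(2*t) + 1/2))
            * (TT τ al (x + be) * TT τ (1/2) (x - q + 1/2))) := by
      linear_combination (TT τ al (t + be) * TT τ (1/2) (t + q + 1/2)) * hd11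
        + (Complex.exp (-(4 * (Real.pi : ℂ) * I * al * be))
            * (TT τ al (t + be) * TT τ (1/2) (t - q + 1/2))) * hd12
        + (TT (2*τ) ((al + 1/2)/2) (2*(x - q/2) + be + 1/2)
            * TT (2*τ) ((al - 1/2)/2) (2*(t - q/2) + be - 1/2)
          + TT (2*τ) ((al + 1/2 + 1)/2) (2*(x - q/2) + be + 1/2)
            * TT (2*τ) ((al - 1/2 + 1)/2) (2*(t - q/2) + be - 1/2)) * e1
        + Complex.exp (-(4 * (Real.pi : ℂ) * I * al * be))
          * (TT (2*τ) ((al + 1/2)/2) (2*(x - q/2) + be + 1/2)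
            * TT (2*τ) ((al - 1/2)/2) (2*(-t - q/2) + be - 1/2)
          + TT (2*τ) ((al + 1/2 + 1)/2) (2*(x - q/2) + be + 1/2)
            * TT (2*τ) ((al - 1/2 + 1)/2) (2*(-t - q/2) + be - 1/2)) * e2
        + (TT τ al (x + be) * TT τ (1/2) (x - q + 1/2)) * e3
        + (Complex.exp (-(4 * (Real.pi : ℂ) * I * al * be))
            * Complex.exp ((Real.pi : ℂ) * I * (al - 1/2)) *
            (TT (2*τ) ((al - 1/2 + 1)/2) (2*(t - q/2) + be - 1/2)
              * TT (2*τ) ((al - 1/2)/2) (2*(-t - q/2) + be - 1/2)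
             - TT (2*τ) ((al - 1/2)/2) (2*(t - q/2) + be - 1/2)
              * TT (2*τ) ((al - 1/2 + 1)/2) (2*(-t - q/2) + be - 1/2))) * hd13
    -- K2
    have K2 : TT τ al (t + be) *
        (TT τ (1/2) (t + q + 1/2) * (TT τ al (x + q - t + be) * TT τ (1/2) (x + t + 1/2))
         + TT τ (1/2) (t - q + 1/2) * (Complex.exp (-(4 * (Real.pi : ℂ) * I * al * be))
            * (TT τ al (x + t + q + be) * TT τ (1/2) (x - t + 1/2))))
        = -((TT τ al (q + be) * TT τ (1/2) (-(2*t) + 1/2))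
            * (TT τ al (x + be) * TT τ (1/2) (x + q + 1/2))) := by
      linear_combination (TT τ al (t + be) * TT τ (1/2) (t + q + 1/2)) * hd21
        + (Complex.exp (-(4 * (Real.pi : ℂ) * I * al * be))
            * (TT τ al (t + be) * TT τ (1/2) (t - q + 1/2))) * hd22
        + (TT (2*τ) ((al + 1/2)/2) (2*(x + q/2) + be + 1/2)
            * TT (2*τ) ((al - 1/2)/2) (2*(q/2 - t) + be - 1/2)
          + TT (2*τ) ((al + 1/2 + 1)/2) (2*(x + q/2) + be + 1/2)
            * TT (2*τ) ((al - 1/2 + 1)/2) (2*(q/2 - t) + be - 1/2)) * B1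
        + (TT (2*τ) ((al + 1/2)/2) (2*(x + q/2) + be + 1/2)
            * TT (2*τ) ((al - 1/2)/2) (2*(t + q/2) + be - 1/2)
          + TT (2*τ) ((al + 1/2 + 1)/2) (2*(x + q/2) + be + 1/2)
            * TT (2*τ) ((al - 1/2 + 1)/2) (2*(t + q/2) + be - 1/2)) * e5
        + (TT τ al (x + be) * TT τ (1/2) (x + q + 1/2)) * B3
        + (Complex.exp ((Real.pi : ℂ) * I * (al - 1/2)) *
            (TT (2*τ) ((al - 1/2 + 1)/2) (2*(t + q/2) + be - 1/2)
              * TT (2*τ) ((al - 1/2)/2) (2*(q/2 - t) + be - 1/2)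
             - TT (2*τ) ((al - 1/2)/2) (2*(t + q/2) + be - 1/2)
              * TT (2*τ) ((al - 1/2 + 1)/2) (2*(q/2 - t) + be - 1/2))) * hd23
    linear_combination TT τ (1/2) (x + q + 1/2) * K1 - TT τ (1/2) (x - q + 1/2) * K2
  -- analytic continuation in t
  have hTTcomp : ∀ (a : ℂ) (u : ℂ → ℂ), Differentiable ℂ u →
      Differentiable ℂ (fun t => TT τ a (u t)) := by
    intro a u hu
    exact (TT_differentiable hτ a).comp hu
  have hdiff : Differentiable ℂ B := by
    rw [hB]
    apply Differentiable.sub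
    apply Differentiable.sub
    apply Differentiable.add
    · exact (((hTTcomp _ _ (by fun_prop)).mul (hTTcomp _ _ (by fun_prop))).mul
        (hTTcomp _ _ (by fun_prop))).mul (hTTcomp _ _ (by fun_prop))
    · exact (((hTTcomp _ _ (by fun_prop)).mul (hTTcomp _ _ (by fun_prop))).mul
        (hTTcomp _ _ (by fun_prop))).mul (hTTcomp _ _ (by fun_prop))
    · exact (((hTTcomp _ _ (by fun_prop)).mul (hTTcomp _ _ (by fun_prop))).mul
        (hTTcomp _ _ (by fun_prop))).mul (hTTcomp _ _ (by fun_prop))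
    · exact (((hTTcomp _ _ (by fun_prop)).mul (hTTcomp _ _ (by fun_prop))).mul
        (hTTcomp _ _ (by fun_prop))).mul (hTTcomp _ _ (by fun_prop))
  have hfdiff : Differentiable ℂ (fun t : ℂ => TT τ al (t + be)) :=
    hTTcomp al _ (by fun_prop)
  have hne : ∃ w : ℂ, TT τ al (w + be) ≠ 0 := by
    obtain ⟨z, hz⟩ := jacobiTheta₂_exists_ne_zero hτ
    refine ⟨z - be - al * τ, ?_⟩
    rw [TT_eq_jacobiTheta₂]
    apply mul_ne_zero (Complex.exp_ne_zero _)
    rw [show z - be - al * τ + be + al * τ = z by ring]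
    exact hz
  intro t
  by_contra hBt
  have hev : ∀ᶠ s in nhds t, B s ≠ 0 :=
    (hdiff.continuous.continuousAt).eventually_ne hBt
  have hfz : (fun s : ℂ => TT τ al (s + be)) =ᶠ[nhds t] 0 := by
    filter_upwards [hev] with s hs
    have hk := key s
    rcases mul_eq_zero.mp hk with h | h
    · exact h
    · exact absurd h hs
  have hA : AnalyticOnNhd ℂ (fun s : ℂ => TT τ al (s + be)) Set.univ :=
    analyticOnNhd_univ_iff_differentiable.mpr hfdiff
  have hzero := hA.eqOn_zero_of_preconnected_of_eventuallyEq_zero isPreconnected_univ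
    (Set.mem_univ t) hfz
  obtain ⟨w, hw⟩ := hne
  exact hw (hzero (Set.mem_univ w))

lemma jT1 (z τ : ℂ) : jTheta 1 z τ = -TT τ (1/2) (z + 1/2) := by
  simp only [jTheta, TT]
  congr 1
  apply tsum_congr
  intro n
  rw [Tterm]
  congr 1
  ring

lemma jT2 (z τ : ℂ) : jTheta 2 z τ = TT τ (1/2) (z + 0) := by
  simp only [jTheta, TT]
  apply tsum_congr
  intro n
  rw [Tterm]
  congr 1
  ring

lemma jT3 (z τ : ℂ) : jTheta 3 z τ = TT τ 0 (z + 0) := by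
  simp only [jTheta, TT]
  apply tsum_congr
  intro n
  rw [Tterm]
  congr 1
  ring

lemma jT4 (z τ : ℂ) : jTheta 4 z τ = TT τ 0 (z + 1/2) := by
  simp only [jTheta, TT]
  apply tsum_congr
  intro n
  rw [Tterm]
  congr 1
  ring

end


/-- The four-term theta-function identity underlying the intertwining
relation, for every `a ∈ {0,1,2,3}` and all complex `z, η, ℓ, k`. -/
theorem theta_intertwining_identity (τ : ℂ) (hτ : 0 < τ.im) (a : ℕ)
    (ha : a = 0 ∨ a = 1 ∨ a = 2 ∨ a = 3) (z η ℓ k : ℂ) :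
    jTheta 1 (2*(ℓ + k + 1)*η) τ * jTheta (a+1) (2*z + 2*(ℓ + 1)*η) τ *
        jTheta 1 (2*z + 4*k*η) τ * jTheta 1 (2*z - 2*(ℓ - k + 1)*η) τ
      + jTheta 1 (2*(ℓ - k + 1)*η) τ * jTheta (a+1) (-(2*z) + 2*(ℓ + 1)*η) τ *
        jTheta 1 (2*z + 4*k*η) τ * jTheta 1 (2*z + 2*(ℓ + k + 1)*η) τ
      = jTheta 1 (2*(ℓ + k + 1)*η) τ * jTheta (a+1) (2*z + 2*(2*k - ℓ - 1)*η) τ *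
          jTheta 1 (2*z) τ * jTheta 1 (2*z + 2*(ℓ + k + 1)*η) τ
        + jTheta 1 (2*(ℓ - k + 1)*η) τ * jTheta (a+1) (-(2*z) - 2*(2*k + ℓ + 1)*η) τ *
          jTheta 1 (2*z) τ * jTheta 1 (2*z - 2*(ℓ - k + 1)*η) τ := by
  rcases ha with rfl | rfl | rfl | rfl
  · simp only [zero_add, jT1]
    linear_combination mainE τ hτ (1/2) (1/2) (Or.inr rfl) (Or.inr rfl)
      (2*z + 2*k*η) (2*(ℓ + 1)*η) (2*k*η)
      (2*(ℓ + k + 1)*η) (2*(ℓ - k + 1)*η) (2*z + 4*k*η) (2*z)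
      (2*z - 2*(ℓ - k + 1)*η) (2*z + 2*(ℓ + k + 1)*η)
      (2*z + 2*(ℓ + 1)*η) (-(2*z) + 2*(ℓ + 1)*η)
      (2*z + 2*(2*k - ℓ - 1)*η) (-(2*z) - 2*(2*k + ℓ + 1)*η)
      (by ring) (by ring) (by ring) (by ring) (by ring) (by ring) (by ring) (by ring)
      (by ring) (by ring)
  · norm_num only
    simp only [jT1, jT2]
    linear_combination (-1 : ℂ) * mainE τ hτ (1/2) 0 (Or.inr rfl) (Or.inl rfl)
      (2*z + 2*k*η) (2*(ℓ + 1)*η) (2*k*η)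
      (2*(ℓ + k + 1)*η) (2*(ℓ - k + 1)*η) (2*z + 4*k*η) (2*z)
      (2*z - 2*(ℓ - k + 1)*η) (2*z + 2*(ℓ + k + 1)*η)
      (2*z + 2*(ℓ + 1)*η) (-(2*z) + 2*(ℓ + 1)*η)
      (2*z + 2*(2*k - ℓ - 1)*η) (-(2*z) - 2*(2*k + ℓ + 1)*η)
      (by ring) (by ring) (by ring) (by ring) (by ring) (by ring) (by ring) (by ring)
      (by ring) (by ring)
  · norm_num only
    simp only [jT1, jT3]
    linear_combination (-1 : ℂ) * mainE τ hτ 0 0 (Or.inl rfl) (Or.inl rfl)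
      (2*z + 2*k*η) (2*(ℓ + 1)*η) (2*k*η)
      (2*(ℓ + k + 1)*η) (2*(ℓ - k + 1)*η) (2*z + 4*k*η) (2*z)
      (2*z - 2*(ℓ - k + 1)*η) (2*z + 2*(ℓ + k + 1)*η)
      (2*z + 2*(ℓ + 1)*η) (-(2*z) + 2*(ℓ + 1)*η)
      (2*z + 2*(2*k - ℓ - 1)*η) (-(2*z) - 2*(2*k + ℓ + 1)*η)
      (by ring) (by ring) (by ring) (by ring) (by ring) (by ring) (by ring) (by ring)
      (by ring) (by ring)
  · norm_num only
    simp only [jT1, jT4]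
    linear_combination (-1 : ℂ) * mainE τ hτ 0 (1/2) (Or.inl rfl) (Or.inr rfl)
      (2*z + 2*k*η) (2*(ℓ + 1)*η) (2*k*η)
      (2*(ℓ + k + 1)*η) (2*(ℓ - k + 1)*η) (2*z + 4*k*η) (2*z)
      (2*z - 2*(ℓ - k + 1)*η) (2*z + 2*(ℓ + k + 1)*η)
      (2*z + 2*(ℓ + 1)*η) (-(2*z) + 2*(ℓ + 1)*η)
      (2*z + 2*(2*k - ℓ - 1)*η) (-(2*z) - 2*(2*k + ℓ + 1)*η)
      (by ring) (by ring) (by ring) (by ring) (by ring) (by ring) (by ring) (by ring)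
      (by ring) (by ring)
end

section
/- Let 2ℓ ∈ ℤ≥0 and ε₁, ε₂ ∈ {+1,−1}. Then for all z₁, z₂, η ∈ ℂ: θ₁(z₁ + ε₁ε₂ z₂ − 2ε₁ℓη | τ) · φ_ℓ(z₁+ε₁η, z₂+ε₂η) = θ₁(z₁ + ε₁ε₂ z₂ + 2ε₁(ℓ+1)η | τ) · φ_ℓ(z₁, z₂). -/
/-- `Φ_ℓ(z) = ∏_{j=0}^{2ℓ} θ₁(z + 2(j−ℓ)η|τ)`, written with `n = 2ℓ ∈ ℤ≥0`. -/
noncomputable def PhiFun (τ η : ℂ) (n : ℕ) (z : ℂ) : ℂ :=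
  ∏ j ∈ Finset.range (n+1), jTheta 1 (z + (2*(j : ℂ) - (n : ℂ))*η) τ

/-- `φ_ℓ(z₁,z₂) = Φ_ℓ(z₁−z₂)·Φ_ℓ(z₁+z₂)`, with `n = 2ℓ`. -/
noncomputable def phiFun (τ η : ℂ) (n : ℕ) (z₁ z₂ : ℂ) : ℂ :=
  PhiFun τ η n (z₁ - z₂) * PhiFun τ η n (z₁ + z₂)

/-!
Only the telescoping structure of `Φ_ℓ` matters, not any property of `θ₁`: the arguments of the
factors of `Φ_ℓ(w)` run through `w + kη`, `k = -2ℓ, -2ℓ+2, …, 2ℓ`, so multiplying `Φ_ℓ(w + 2η)` by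
the factor at `k = -2ℓ` or `Φ_ℓ(w)` by the factor at `k = 2ℓ + 2` gives the same product of
`2ℓ + 2` factors. Reversing the order of the factors handles `η ↦ -η`, and since `Φ_ℓ(z₁ - z₂)` and
`Φ_ℓ(z₁ + z₂)` are swapped by `z₂ ↦ -z₂`, the sign `ε₂` can be absorbed into `z₂`.
-/

open Finset

section ShiftedProduct

variable {M : Type*} [CommMonoid M] (f : ℂ → M) (n : ℕ)

theorem prod_range_neg_step (η w : ℂ) :
    ∏ j ∈ range (n + 1), f (w + (2 * j - n) * -η)
      = ∏ j ∈ range (n + 1), f (w + (2 * j - n) * η) := by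
  rw [← prod_range_reflect]
  refine prod_congr rfl fun j hj => congrArg f ?_
  rw [mem_range] at hj
  rw [Nat.add_sub_cancel, Nat.cast_sub (by omega)]
  ring

theorem mul_prod_range_shift (η w : ℂ) :
    f (w - n * η) * ∏ j ∈ range (n + 1), f (w + 2 * η + (2 * j - n) * η)
      = f (w + (n + 2) * η) * ∏ j ∈ range (n + 1), f (w + (2 * j - n) * η) := by
  have extend_left : f (w - n * η) * ∏ j ∈ range (n + 1), f (w + 2 * η + (2 * j - n) * η)
      = ∏ j ∈ range (n + 2), f (w + (2 * j - n) * η) := by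
    rw [prod_range_succ' (n := n + 1), mul_comm]
    congr 1
    · exact prod_congr rfl fun j _ => congrArg f (by push_cast; ring)
    · exact congrArg f (by push_cast; ring)
  rw [extend_left, prod_range_succ, mul_comm]
  exact congrArg (· * _) (congrArg f (by push_cast; ring))

theorem mul_prod_range_shift_of_sign {ε : ℂ} (hε : ε = 1 ∨ ε = -1) (η w : ℂ) :
    f (w - ε * n * η) * ∏ j ∈ range (n + 1), f (w + 2 * ε * η + (2 * j - n) * η)
      = f (w + ε * (n + 2) * η) * ∏ j ∈ range (n + 1), f (w + (2 * j - n) * η) := by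
  rcases hε with rfl | rfl
  · simpa only [one_mul, mul_one] using mul_prod_range_shift f n η w
  · have h := mul_prod_range_shift f n (-η) w
    rw [prod_range_neg_step, prod_range_neg_step] at h
    convert h using 4 <;> ring

end ShiftedProduct

theorem phiFun_mul_sign_right (τ η : ℂ) (n : ℕ) (z₁ : ℂ) {s : ℂ} (hs : s = 1 ∨ s = -1) (z₂ : ℂ) :
    phiFun τ η n z₁ (s * z₂) = phiFun τ η n z₁ z₂ := by
  rcases hs with rfl | rfl
  · rw [one_mul]
  · rw [phiFun, phiFun, neg_one_mul, sub_neg_eq_add, ← sub_eq_add_neg, mul_comm]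

theorem jTheta_mul_phiFun_add_sign (τ η : ℂ) (n : ℕ) (z₁ z₂ : ℂ) {ε : ℂ} (hε : ε = 1 ∨ ε = -1) :
    jTheta 1 (z₁ + z₂ - ε * n * η) τ * phiFun τ η n (z₁ + ε * η) (z₂ + ε * η)
      = jTheta 1 (z₁ + z₂ + ε * (n + 2) * η) τ * phiFun τ η n z₁ z₂ := by
  have shift := mul_prod_range_shift_of_sign (jTheta 1 · τ) n hε η (z₁ + z₂)
  simp only [phiFun, PhiFun]
  rw [show z₁ + ε * η - (z₂ + ε * η) = z₁ - z₂ by ring,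
    show z₁ + ε * η + (z₂ + ε * η) = z₁ + z₂ + 2 * ε * η by ring]
  linear_combination (∏ j ∈ range (n + 1), jTheta 1 (z₁ - z₂ + (2 * j - n) * η) τ) * shift

theorem phi_local_commutation_general (τ : ℂ) (n : ℕ) (η z₁ z₂ ε₁ ε₂ : ℂ)
    (hε₁ : ε₁ = 1 ∨ ε₁ = -1) (hε₂ : ε₂ = 1 ∨ ε₂ = -1) :
    jTheta 1 (z₁ + ε₁*ε₂*z₂ - ε₁*(n : ℂ)*η) τ * phiFun τ η n (z₁ + ε₁*η) (z₂ + ε₂*η)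
      = jTheta 1 (z₁ + ε₁*ε₂*z₂ + ε₁*((n : ℂ) + 2)*η) τ * phiFun τ η n z₁ z₂ := by
  have hsign : ε₁ * ε₂ = 1 ∨ ε₁ * ε₂ = -1 := by
    rcases hε₁ with rfl | rfl <;> rcases hε₂ with rfl | rfl <;> norm_num
  have hε₂_sq : ε₂ * ε₂ = 1 := by rcases hε₂ with rfl | rfl <;> norm_num
  have key := jTheta_mul_phiFun_add_sign τ η n z₁ (ε₁ * ε₂ * z₂) hε₁
  rwa [show ε₁ * ε₂ * z₂ + ε₁ * η = ε₁ * ε₂ * (z₂ + ε₂ * η) by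
      linear_combination -ε₁ * η * hε₂_sq,
    phiFun_mul_sign_right τ η n _ hsign, phiFun_mul_sign_right τ η n _ hsign] at key

/-- Local commutation rule: for `2ℓ = n ∈ ℤ≥0` and `ε₁, ε₂ ∈ {±1}`,
`θ₁(z₁+ε₁ε₂z₂−2ε₁ℓη)·φ_ℓ(z₁+ε₁η, z₂+ε₂η) = θ₁(z₁+ε₁ε₂z₂+2ε₁(ℓ+1)η)·φ_ℓ(z₁,z₂)`. -/
theorem phi_local_commutation (τ : ℂ) (hτ : 0 < τ.im) (n : ℕ) (η z₁ z₂ ε₁ ε₂ : ℂ)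
    (hε₁ : ε₁ = 1 ∨ ε₁ = -1) (hε₂ : ε₂ = 1 ∨ ε₂ = -1) :
    jTheta 1 (z₁ + ε₁*ε₂*z₂ - ε₁*(n : ℂ)*η) τ * phiFun τ η n (z₁ + ε₁*η) (z₂ + ε₂*η)
      = jTheta 1 (z₁ + ε₁*ε₂*z₂ + ε₁*((n : ℂ) + 2)*η) τ * phiFun τ η n z₁ z₂ :=
  phi_local_commutation_general τ n η z₁ z₂ ε₁ ε₂ hε₁ hε₂
end
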